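/- arXiv:2409.11877 — 3 statements merged into one kernel-verified Lean document; each statement's English description precedes it below -/
import Mathlib

section
/- Let (Q, n) be a Noetherian local ring with infinite residue field, f_1, …, f_c a Q-regular sequence, A = Q/(f_1,…,f_c), and M a finitely generated A-module with projdim_Q M finite and cx_A M ≥ 2. Let (F, ∂) be a minimal free resolution of M and let ξ : F(+2) → F be a degree −2 chain map with ξ_n : F_{n+2} → F_n surjective for all n ≥ n_0; set G_n = ker(ξ_n) with induced differentials δ_n : G_n → G_{n−1}. Then for every n ≥ n_0 + 1 there are bases of F_n, F_{n−1}, F_{n+1}, F_{n+2}, G_n, G_{n−1} with respect to which the matrix of ∂_{n+2} has the block upper-triangular form [[δ_n, U_n],[0, ∂_n]]; consequently, for every r ≥ 1 and every n ≥ n_0 + 1, the ideal of r × r minors satisfies I^r(∂_n) ⊆ I^r(∂_{n+2}). -/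
open IsLocalRing

/-- A minimal free resolution `(𝔽, ∂)` of `M` by finite free `A`-modules over the local ring
`A`:  `d n` is the differential `∂_{n+1} : F_{n+1} → F_n`, and minimality means
`∂ (F_{n+1}) ⊆ 𝔪 F_n` for all `n`. -/
structure MinimalFreeResolution (A : Type) [CommRing A] [IsLocalRing A]
    (M : Type) [AddCommGroup M] [Module A M] where
  rank : ℕ → ℕ
  d : (n : ℕ) → ((Fin (rank (n + 1)) → A) →ₗ[A] (Fin (rank n) → A))
  aug : (Fin (rank 0) → A) →ₗ[A] M
  aug_surjective : Function.Surjective aug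
  exact_at_aug : LinearMap.ker aug = LinearMap.range (d 0)
  exact_at : ∀ n, LinearMap.ker (d n) = LinearMap.range (d (n + 1))
  minimal : ∀ n, LinearMap.range (d n) ≤
    (IsLocalRing.maximalIdeal A) • (⊤ : Submodule A (Fin (rank n) → A))

/-- The complexity of a sequence of Betti numbers `β`:
`inf { m ≥ 0 | limsup β n / n ^ (m - 1) < ∞ }`, expressed as the least `m` such that
`β n · n ≤ C · n ^ m` for some constant `C` and all `n`. -/
noncomputable def complexityOf (β : ℕ → ℕ) : ℕ :=
  sInf {m : ℕ | ∃ C : ℕ, ∀ n : ℕ, β n * n ≤ C * n ^ m}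

/-- `M` admits a finite resolution by finite free `Q`-modules, i.e. `projdim_Q M < ∞`. -/
def HasFiniteFreeResolution (Q : Type) [CommRing Q] (M : Type) [AddCommGroup M]
    [Module Q M] : Prop :=
  ∃ (len : ℕ) (rk : ℕ → ℕ)
    (dd : (n : ℕ) → ((Fin (rk (n + 1)) → Q) →ₗ[Q] (Fin (rk n) → Q)))
    (aug : (Fin (rk 0) → Q) →ₗ[Q] M),
      Function.Surjective aug ∧ LinearMap.ker aug = LinearMap.range (dd 0) ∧
      (∀ n, LinearMap.ker (dd n) = LinearMap.range (dd (n + 1))) ∧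
      ∀ n, len ≤ n → rk n = 0

/-- The `n`-th syzygy of `M`, presented as `F_n / im ∂_{n+1}` (so `SyzQuot res 0 ≅ M` and
`SyzQuot res n ≅ Syz^A_n (M)`). -/
abbrev SyzQuot {A : Type} [CommRing A] [IsLocalRing A] {M : Type} [AddCommGroup M]
    [Module A M] (res : MinimalFreeResolution A M) (n : ℕ) :=
  (Fin (res.rank n) → A) ⧸ LinearMap.range (res.d n)

/-- The map `Syz_{n+2}(M) → Syz_n(M)` induced by a degree `-2` chain map `ξ : 𝔽(+2) → 𝔽`. -/
noncomputable def syzMap {A : Type} [CommRing A] [IsLocalRing A] {M : Type} [AddCommGroup M]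
    [Module A M] (res : MinimalFreeResolution A M)
    (ξ : (n : ℕ) → ((Fin (res.rank (n + 2)) → A) →ₗ[A] (Fin (res.rank n) → A)))
    (hξ : ∀ n, ξ n ∘ₗ res.d (n + 2) = res.d n ∘ₗ ξ (n + 1)) (n : ℕ) :
    SyzQuot res (n + 2) →ₗ[A] SyzQuot res n :=
  Submodule.mapQ _ _ (ξ n) (by
    rintro x hx
    obtain ⟨y, rfl⟩ := hx
    exact ⟨ξ (n + 1) y, (LinearMap.congr_fun (hξ n) y).symm⟩)

/-- The differential of the subcomplex `ker ξ` of `𝔽`: the restriction of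
`∂_{n+3} : F_{n+3} → F_{n+2}` to a map `G_{n+1} = ker ξ_{n+1} → G_n = ker ξ_n`. -/
noncomputable def kerMap {A : Type} [CommRing A] [IsLocalRing A] {M : Type} [AddCommGroup M]
    [Module A M] (res : MinimalFreeResolution A M)
    (ξ : (n : ℕ) → ((Fin (res.rank (n + 2)) → A) →ₗ[A] (Fin (res.rank n) → A)))
    (hξ : ∀ n, ξ n ∘ₗ res.d (n + 2) = res.d n ∘ₗ ξ (n + 1)) (n : ℕ) :
    ↥(LinearMap.ker (ξ (n + 1))) →ₗ[A] ↥(LinearMap.ker (ξ n)) :=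
  (res.d (n + 2)).restrict (fun x hx => by
    have h1 : ξ n (res.d (n + 2) x) = res.d n (ξ (n + 1) x) := LinearMap.congr_fun (hξ n) x
    have h2 : ξ (n + 1) x = 0 := hx
    simp only [LinearMap.mem_ker, h1, h2, map_zero])

/-- The ideal generated by the `r × r` minors of (the matrix of) a linear map between finite
free modules.  (It is independent of the chosen bases; here the standard bases are used.) -/
noncomputable def minorsIdeal {A : Type} [CommRing A] {a b : ℕ} (r : ℕ)
    (φ : (Fin a → A) →ₗ[A] (Fin b → A)) : Ideal A :=
  Ideal.span {x : A | ∃ (ρ : Fin r → Fin b) (γ : Fin r → Fin a),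
    x = (Matrix.of fun i j => LinearMap.toMatrix' φ (ρ i) (γ j)).det}


section AuxDet

variable {A : Type} [CommRing A]

lemma det_expand_rows_aux {r : ℕ} {β : Type} [Fintype β] [DecidableEq β]
    (X : Matrix (Fin r) β A) (M : Matrix β (Fin r) A) :
    (X * M).det = ∑ g : Fin r → β, (∏ i, X i (g i)) * (M.submatrix g id).det := by
  have h : X * M = Matrix.of (fun i => ∑ k, X i k • M k) := by
    ext i j
    simp [Matrix.mul_apply, Finset.sum_apply]
  rw [h]
  show (Matrix.detRowAlternating (R := A) (n := Fin r)).toMultilinearMap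
      (fun i => ∑ k, (fun k => X i k • M k) k) = _
  rw [MultilinearMap.map_sum]
  refine Finset.sum_congr rfl fun g _ => ?_
  show (Matrix.detRowAlternating (R := A) (n := Fin r)).toMultilinearMap
      (fun i => X i (g i) • M (g i)) = _
  rw [MultilinearMap.map_smul_univ]
  rfl

lemma det_expand_cols_aux {r : ℕ} {β : Type} [Fintype β] [DecidableEq β]
    (M : Matrix (Fin r) β A) (Z : Matrix β (Fin r) A) :
    (M * Z).det = ∑ g : Fin r → β, (∏ j, Z (g j) j) * (M.submatrix id g).det := by
  rw [← Matrix.det_transpose, Matrix.transpose_mul, det_expand_rows_aux]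
  refine Finset.sum_congr rfl fun g _ => ?_
  rw [← Matrix.transpose_submatrix, Matrix.det_transpose]
  rfl

lemma submatrix_mul_id_aux {l m n p q : Type} [Fintype n]
    (M : Matrix m n A) (N : Matrix n p A) (ρ : l → m) (γ : q → p) :
    (M * N).submatrix ρ γ = M.submatrix ρ id * N.submatrix id γ := by
  ext i j
  simp [Matrix.mul_apply]

lemma det_triple_mem_aux {r : ℕ} {a' b' : ℕ}
    (X : Matrix (Fin r) (Fin b') A) (D : Matrix (Fin b') (Fin a') A)
    (Z : Matrix (Fin a') (Fin r) A) {I : Ideal A}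
    (hI : ∀ (ρ : Fin r → Fin b') (γ : Fin r → Fin a'), (D.submatrix ρ γ).det ∈ I) :
    (X * D * Z).det ∈ I := by
  rw [Matrix.mul_assoc, det_expand_rows_aux]
  refine Ideal.sum_mem _ fun g _ => Ideal.mul_mem_left _ _ ?_
  have h1 : (D * Z).submatrix g id = D.submatrix g id * Z := by
    rw [submatrix_mul_id_aux, Matrix.submatrix_id_id]
  rw [h1, det_expand_cols_aux]
  refine Ideal.sum_mem _ fun h _ => Ideal.mul_mem_left _ _ ?_
  have h2 : (D.submatrix g id).submatrix id h = D.submatrix g h := rfl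
  rw [h2]
  exact hI g h

lemma minors_comp_le_aux {a b a' b' : ℕ} (r : ℕ)
    (P : (Fin b' → A) →ₗ[A] (Fin b → A)) (φ : (Fin a' → A) →ₗ[A] (Fin b' → A))
    (S : (Fin a → A) →ₗ[A] (Fin a' → A)) :
    minorsIdeal r (P ∘ₗ φ ∘ₗ S) ≤ minorsIdeal r φ := by
  rw [minorsIdeal, Ideal.span_le]
  rintro x ⟨ρ, γ, rfl⟩
  have hm : LinearMap.toMatrix' (P ∘ₗ φ ∘ₗ S) =
      LinearMap.toMatrix' P * (LinearMap.toMatrix' φ * LinearMap.toMatrix' S) := by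
    rw [LinearMap.toMatrix'_comp, LinearMap.toMatrix'_comp]
  have key : (Matrix.of fun i j => LinearMap.toMatrix' (P ∘ₗ φ ∘ₗ S) (ρ i) (γ j)).det
      = ((LinearMap.toMatrix' P).submatrix ρ id * LinearMap.toMatrix' φ *
          (LinearMap.toMatrix' S).submatrix id γ).det := by
    congr 1
    show (LinearMap.toMatrix' (P ∘ₗ φ ∘ₗ S)).submatrix ρ γ = _
    rw [hm, submatrix_mul_id_aux, submatrix_mul_id_aux, Matrix.submatrix_id_id,
      Matrix.mul_assoc]
  rw [key]
  refine det_triple_mem_aux _ _ _ fun g h => ?_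
  exact Ideal.subset_span ⟨g, h, rfl⟩

end AuxDet

section AuxSplit

variable {A : Type} [CommRing A] [IsLocalRing A]

lemma split_package_aux {a b : ℕ} (ξ : (Fin a → A) →ₗ[A] (Fin b → A))
    (s : (Fin b → A) →ₗ[A] (Fin a → A)) (hs : ξ ∘ₗ s = LinearMap.id) :
    ∃ (g : ℕ) (bG : Module.Basis (Fin g) A ↥(LinearMap.ker ξ))
      (bC : Module.Basis (Fin g ⊕ Fin b) A (Fin a → A)),
      (∀ i, bC (Sum.inl i) = (bG i : Fin a → A)) ∧
      (∀ i, bC (Sum.inr i) = s (Pi.basisFun A (Fin b) i)) ∧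
      (∀ (x : Fin a → A) (i : Fin b), bC.repr x (Sum.inr i) = ξ x i) ∧
      (∀ (x : Fin a → A) (hx : x ∈ LinearMap.ker ξ) (i : Fin g),
        bC.repr x (Sum.inl i) = bG.repr ⟨x, hx⟩ i) := by
  have hsx : ∀ y, ξ (s y) = y := fun y => LinearMap.congr_fun hs y
  have hmem : ∀ x : Fin a → A, x - s (ξ x) ∈ LinearMap.ker ξ := by
    intro x
    simp [LinearMap.mem_ker, map_sub, hsx]
  let ρ : (Fin a → A) →ₗ[A] ↥(LinearMap.ker ξ) :=
    LinearMap.codRestrict _ (LinearMap.id - s ∘ₗ ξ) (fun x => hmem x)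
  have hρ : ∀ (x) (hx : x ∈ LinearMap.ker ξ), ρ x = ⟨x, hx⟩ := by
    intro x hx
    ext
    simp [ρ, LinearMap.mem_ker.mp hx]
  have : Module.Projective A ↥(LinearMap.ker ξ) :=
    Module.Projective.of_split (LinearMap.ker ξ).subtype ρ (by
      ext x
      simp [hρ x.1 x.2])
  have : Module.Finite A ↥(LinearMap.ker ξ) :=
    Module.Finite.of_surjective ρ (fun k => ⟨k.1, by rw [hρ k.1 k.2]⟩)
  have : Module.FinitePresentation A ↥(LinearMap.ker ξ) :=
    Module.finitePresentation_of_projective _ _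
  have hfree : Module.Free A ↥(LinearMap.ker ξ) :=
    Module.free_of_flat_of_isLocalRing
  refine ⟨Fintype.card (Module.Free.ChooseBasisIndex A ↥(LinearMap.ker ξ)),
    (Module.Free.chooseBasis A _).reindex (Fintype.equivFin _), ?_⟩
  set bG := (Module.Free.chooseBasis A ↥(LinearMap.ker ξ)).reindex (Fintype.equivFin _)
  let e : (↥(LinearMap.ker ξ) × (Fin b → A)) ≃ₗ[A] (Fin a → A) :=
    LinearEquiv.ofLinear ((LinearMap.ker ξ).subtype.coprod s) (LinearMap.prod ρ ξ)
      (by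
        ext x
        simp [ρ, sub_add_cancel])
      (by
        refine LinearMap.ext fun p => Prod.ext (Subtype.ext ?_) ?_
        · simp [ρ, hsx, LinearMap.mem_ker.mp p.1.2]
        · simp [hsx, LinearMap.mem_ker.mp p.1.2])
  refine ⟨(bG.prod (Pi.basisFun A (Fin b))).map e, ?_, ?_, ?_, ?_⟩
  · intro i
    simp [e, Module.Basis.prod_apply]
  · intro i
    simp [e, Module.Basis.prod_apply]
  · intro x i
    have h1 : ((bG.prod (Pi.basisFun A (Fin b))).map e).repr x =
        (bG.prod (Pi.basisFun A (Fin b))).repr (e.symm x) := rfl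
    rw [h1, Module.Basis.prod_repr_inr]
    have h2 : (e.symm x).2 = ξ x := rfl
    rw [h2]
    simp
  · intro x hx i
    have h1 : ((bG.prod (Pi.basisFun A (Fin b))).map e).repr x =
        (bG.prod (Pi.basisFun A (Fin b))).repr (e.symm x) := rfl
    rw [h1, Module.Basis.prod_repr_inl]
    have h2 : (e.symm x).1 = ρ x := rfl
    rw [h2, hρ x hx]

end AuxSplit

/-- **Theorem 5.1(4)-(5).**  With `ξ : 𝔽(+2) → 𝔽` a degree `-2` chain map on a minimal free
resolution of `M`, surjective in degrees `≥ n₀`, and `G n = ker ξ n` with induced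
differentials `δ`, for every `n = m + 1 ≥ n₀ + 1` there are bases in which the matrix of
`∂ (n + 2)` has the block upper-triangular form `[[δ n, U], [0, ∂ n]]`; consequently
`I^r (∂ n) ⊆ I^r (∂ (n + 2))` for every `r ≥ 1`. -/
theorem differential_block_form_and_minors_mono
    (Q : Type) [CommRing Q] [IsLocalRing Q] [IsNoetherianRing Q]
    [Infinite (ResidueField Q)]
    (c : ℕ) (f : Fin c → Q)
    (hfreg : RingTheory.Sequence.IsRegular Q (List.ofFn f))
    (A : Type) [CommRing A] [IsLocalRing A]
    (π : Q →+* A) (hπ : Function.Surjective π)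
    (hker : RingHom.ker π = Ideal.span (Set.range f))
    (M : Type) [AddCommGroup M] [Module A M] [Module.Finite A M]
    [Module Q M] (hsmul : ∀ (q : Q) (x : M), q • x = π q • x)
    (hpdQ : HasFiniteFreeResolution Q M)
    (res : MinimalFreeResolution A M)
    (hcx : 2 ≤ complexityOf res.rank)
    (ξ : (n : ℕ) → ((Fin (res.rank (n + 2)) → A) →ₗ[A] (Fin (res.rank n) → A)))
    (hξ : ∀ n, ξ n ∘ₗ res.d (n + 2) = res.d n ∘ₗ ξ (n + 1))
    (n₀ : ℕ) (hsurj : ∀ n, n₀ ≤ n → Function.Surjective ⇑(ξ n)) :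
    ∀ m, n₀ ≤ m →
      (∃ (g₁ g₀ : ℕ) (U : Matrix (Fin g₀) (Fin (res.rank (m + 1))) A)
        (bdom : Module.Basis (Fin g₁ ⊕ Fin (res.rank (m + 1))) A (Fin (res.rank (m + 3)) → A))
        (bcod : Module.Basis (Fin g₀ ⊕ Fin (res.rank m)) A (Fin (res.rank (m + 2)) → A))
        (bG₁ : Module.Basis (Fin g₁) A ↥(LinearMap.ker (ξ (m + 1))))
        (bG₀ : Module.Basis (Fin g₀) A ↥(LinearMap.ker (ξ m)))
        (bF₁ : Module.Basis (Fin (res.rank (m + 1))) A (Fin (res.rank (m + 1)) → A))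
        (bF₀ : Module.Basis (Fin (res.rank m)) A (Fin (res.rank m) → A)),
        LinearMap.toMatrix bdom bcod (res.d (m + 2)) =
          Matrix.fromBlocks (LinearMap.toMatrix bG₁ bG₀ (kerMap res ξ hξ m)) U 0
            (LinearMap.toMatrix bF₁ bF₀ (res.d m))) ∧
      ∀ r : ℕ, 1 ≤ r → minorsIdeal r (res.d m) ≤ minorsIdeal r (res.d (m + 2)) := by
  intro m hm
  obtain ⟨s₀, hs₀⟩ := Module.projective_lifting_property (ξ m) LinearMap.id (hsurj m hm)
  obtain ⟨s₁, hs₁⟩ := Module.projective_lifting_property (ξ (m + 1)) LinearMap.id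
    (hsurj (m + 1) (le_trans hm (Nat.le_succ m)))
  obtain ⟨g₀, bG₀, bcod, hc1, hc2, hc3, hc4⟩ := split_package_aux (ξ m) s₀ hs₀
  obtain ⟨g₁, bG₁, bdom, hd1, hd2, hd3, hd4⟩ := split_package_aux (ξ (m + 1)) s₁ hs₁
  have hs₁x : ∀ y, ξ (m + 1) (s₁ y) = y := fun y => LinearMap.congr_fun hs₁ y
  have hker0 : ∀ j : Fin g₁, ξ m (res.d (m + 2) (bG₁ j : Fin (res.rank (m + 3)) → A)) = 0 := by
    intro j
    have h := LinearMap.congr_fun (hξ m) ((bG₁ j : Fin (res.rank (m + 3)) → A))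
    simp only [LinearMap.comp_apply] at h
    rw [h, (bG₁ j).2, map_zero]
  constructor
  · refine ⟨g₁, g₀,
      Matrix.of (fun i j => LinearMap.toMatrix bdom bcod (res.d (m + 2)) (Sum.inl i) (Sum.inr j)),
      bdom, bcod, bG₁, bG₀, Pi.basisFun A _, Pi.basisFun A _, ?_⟩
    ext i j
    rcases i with i | i <;> rcases j with j | j
    · rw [Matrix.fromBlocks_apply₁₁, LinearMap.toMatrix_apply, LinearMap.toMatrix_apply, hd1]
      rw [hc4 _ (LinearMap.mem_ker.mpr (hker0 j)) i]
      have hval : (⟨res.d (m + 2) (bG₁ j : Fin (res.rank (m + 3)) → A),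
          LinearMap.mem_ker.mpr (hker0 j)⟩ : ↥(LinearMap.ker (ξ m))) =
          kerMap res ξ hξ m (bG₁ j) := Subtype.ext rfl
      rw [hval]
    · rw [Matrix.fromBlocks_apply₁₂]
      rfl
    · rw [Matrix.fromBlocks_apply₂₁, LinearMap.toMatrix_apply, hd1, hc3]
      rw [hker0 j]
      rfl
    · rw [Matrix.fromBlocks_apply₂₂, LinearMap.toMatrix_apply, LinearMap.toMatrix_apply, hd2,
        hc3]
      have h := LinearMap.congr_fun (hξ m) (s₁ (Pi.basisFun A (Fin (res.rank (m + 1))) j))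
      simp only [LinearMap.comp_apply] at h
      rw [h, hs₁x]
      simp
  · intro r hr
    have hfact : ξ m ∘ₗ (res.d (m + 2) ∘ₗ s₁) = res.d m := by
      rw [← LinearMap.comp_assoc, hξ m, LinearMap.comp_assoc, hs₁, LinearMap.comp_id]
    calc minorsIdeal r (res.d m) = minorsIdeal r (ξ m ∘ₗ (res.d (m + 2) ∘ₗ s₁)) := by
          rw [hfact]
      _ ≤ minorsIdeal r (res.d (m + 2)) := minors_comp_le_aux r _ _ _
end

section
/- Let (Q, n) be a regular local ring and f_1, …, f_c ∈ n a Q-regular sequence whose initial forms f_1^*, …, f_c^* form a G(Q)-regular sequence. Set B = Q/(f_1,…,f_{c−1}). Then the order of the image of f_c in B equals ord_Q(f_c), i.e., ord_B(f_c mod (f_1,…,f_{c−1})) = ord_Q(f_c). -/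
open IsLocalRing

/-- A (Noetherian) local ring is *regular* if its Krull dimension equals its embedding
dimension `dim_k 𝔪/𝔪²`. -/
def IsRegularLocal (Q : Type) [CommRing Q] [IsLocalRing Q] : Prop :=
  ringKrullDim Q = (Module.finrank (ResidueField Q) (CotangentSpace Q) : WithBot ℕ∞)

/-- For a local ring `Q` with maximal ideal `nn`, elements `f i ∈ nn ^ (s i) \\ nn ^ (s i + 1)`
(so the initial form `(f i)^*` is homogeneous of degree `s i` in the associated graded ring
`G(Q) = ⊕ nn^i/nn^(i+1)`), a set `J` of indices and a degree `dg`, this is the ideal of `Q`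
whose intersection with `nn ^ dg` represents (modulo `nn ^ (dg + 1)`) the degree-`dg`
homogeneous component of the ideal of `G(Q)` generated by the initial forms `(f i)^*`, `i ∈ J`:
namely `nn ^ (dg + 1) + Σ_{i ∈ J} (f i) · nn ^ (dg - s i)`. -/
noncomputable def initialDegreePiece {Q : Type} [CommRing Q] (nn : Ideal Q) {c : ℕ}
    (f : Fin c → Q) (s : Fin c → ℕ) (J : Set (Fin c)) (dg : ℕ) : Ideal Q :=
  nn ^ (dg + 1) ⊔ ⨆ i ∈ J, ⨆ _ : s i ≤ dg, Ideal.span {f i} * nn ^ (dg - s i)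

/-- The initial forms `(f 0)^*, …, (f (c-1))^*` (of degrees `s i = ord (f i)`) form a regular
sequence on the associated graded ring `G(Q) = ⊕ nn^i/nn^(i+1)`: for each `j`, multiplication
by the homogeneous element `(f j)^*` is injective on `G(Q)/((f 0)^*, …, (f (j-1))^*)` in every
degree, expressed on representatives. -/
def InitialFormsRegular {Q : Type} [CommRing Q] (nn : Ideal Q) {c : ℕ}
    (f : Fin c → Q) (s : Fin c → ℕ) : Prop :=
  ∀ (j : Fin c) (k : ℕ), ∀ x ∈ nn ^ k,
    f j * x ∈ initialDegreePiece nn f s {i | i < j} (k + s j) →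
      x ∈ initialDegreePiece nn f s {i | i < j} k

section Aux

variable {Q : Type} [CommRing Q] {c : ℕ}

/-- The ideal `Σ_{i < t} (f i) · nn ^ (d - s i)`, representing the degree-`d` piece of the
ideal of initial forms of `f i`, `i < t`, without the `nn ^ (d+1)` part. -/
noncomputable def gradD (nn : Ideal Q) (f : Fin c → Q) (s : Fin c → ℕ) (t d : ℕ) : Ideal Q :=
  ⨆ i : Fin c, ⨆ _ : (i : ℕ) < t, Ideal.span {f i} * nn ^ (d - s i)

variable {nn : Ideal Q} {f : Fin c → Q} {s : Fin c → ℕ}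

lemma term_le_gradD {t d : ℕ} {i : Fin c} (hi : (i : ℕ) < t) :
    Ideal.span {f i} * nn ^ (d - s i) ≤ gradD nn f s t d :=
  le_iSup₂ (f := fun (i : Fin c) (_ : (i : ℕ) < t) => Ideal.span {f i} * nn ^ (d - s i)) i hi

lemma gradD_le_of {t t' d : ℕ} (h : ∀ i : Fin c, (i : ℕ) < t → (i : ℕ) < t') :
    gradD nn f s t d ≤ gradD nn f s t' d :=
  iSup₂_le fun i hi => term_le_gradD (h i hi)

lemma gradD_mul_pow_le (t e m : ℕ) :
    gradD nn f s t e * nn ^ m ≤ gradD nn f s t (e + m) := by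
  rw [gradD, Submodule.iSup_mul]
  refine iSup_le fun i => ?_
  rw [Submodule.iSup_mul]
  refine iSup_le fun hi => ?_
  calc Ideal.span {f i} * nn ^ (e - s i) * nn ^ m
      = Ideal.span {f i} * nn ^ (e - s i + m) := by rw [mul_assoc, ← pow_add]
    _ ≤ Ideal.span {f i} * nn ^ (e + m - s i) :=
        Ideal.mul_mono_right (Ideal.pow_le_pow_right (by omega))
    _ ≤ gradD nn f s t (e + m) := term_le_gradD hi

lemma gradD_le_pow (hfs : ∀ i, f i ∈ nn ^ s i) (t d : ℕ) :
    gradD nn f s t d ≤ nn ^ d := by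
  refine iSup₂_le fun i _ => ?_
  calc Ideal.span {f i} * nn ^ (d - s i) ≤ nn ^ (s i) * nn ^ (d - s i) :=
        Ideal.mul_mono_left ((Ideal.span_singleton_le_iff_mem _).2 (hfs i))
    _ = nn ^ (s i + (d - s i)) := (pow_add _ _ _).symm
    _ ≤ nn ^ d := Ideal.pow_le_pow_right (by omega)

lemma gradD_succ {t : ℕ} (hc : t < c) (d : ℕ) :
    gradD nn f s (t + 1) d
      = gradD nn f s t d ⊔ Ideal.span {f ⟨t, hc⟩} * nn ^ (d - s ⟨t, hc⟩) := by
  apply le_antisymm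
  · refine iSup₂_le fun i hi => ?_
    rcases Nat.lt_or_ge (i : ℕ) t with h | h
    · exact le_sup_of_le_left (term_le_gradD h)
    · have : i = ⟨t, hc⟩ := Fin.ext (show (i : ℕ) = t by omega)
      subst this
      exact le_sup_right
  · refine sup_le (gradD_le_of fun i hi => by omega) ?_
    exact term_le_gradD (show ((⟨t, hc⟩ : Fin c) : ℕ) < t + 1 by simp)

lemma gradD_le_idp (hfs : ∀ i, f i ∈ nn ^ s i) (j : Fin c) (d : ℕ) :
    gradD nn f s (j : ℕ) d ≤ initialDegreePiece nn f s {i | i < j} d := by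
  refine iSup₂_le fun i hi => ?_
  by_cases hsd : s i ≤ d
  · refine le_sup_of_le_right ?_
    refine le_iSup₂_of_le i (show i ∈ {i | i < j} from Fin.lt_def.2 hi) ?_
    exact le_iSup_of_le hsd le_rfl
  · refine le_sup_of_le_left ?_
    have h0 : d - s i = 0 := by omega
    rw [h0, pow_zero, mul_one, Ideal.span_singleton_le_iff_mem]
    exact Ideal.pow_le_pow_right (by omega) (hfs i)

lemma idp_le (j : Fin c) (d : ℕ) :
    initialDegreePiece nn f s {i | i < j} d ≤ nn ^ (d + 1) ⊔ gradD nn f s (j : ℕ) d := by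
  refine sup_le le_sup_left ?_
  refine iSup₂_le fun i hi => iSup_le fun _ => ?_
  exact le_sup_of_le_right (term_le_gradD (Fin.lt_def.1 hi))

lemma keyK (hfs : ∀ i, f i ∈ nn ^ s i) (hini : InitialFormsRegular nn f s) :
    ∀ t d, gradD nn f s t d ⊓ nn ^ (d + 1) ≤ gradD nn f s t (d + 1) := by
  intro t
  induction t with
  | zero =>
    intro d
    have : gradD nn f s 0 d = ⊥ := by
      refine le_antisymm (iSup₂_le fun i hi => absurd hi (by omega)) bot_le
    rw [this]
    exact inf_le_left.trans bot_le
  | succ t ih =>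
    intro d
    by_cases hc : t < c
    · set j : Fin c := ⟨t, hc⟩ with hj
      rw [gradD_succ hc d, gradD_succ hc (d + 1)]
      rintro z ⟨hz1, hz2⟩
      obtain ⟨w, hw, v, hv, rfl⟩ := Submodule.mem_sup.1 hz1
      obtain ⟨b, hb, rfl⟩ := Ideal.mem_span_singleton_mul.1 hv
      by_cases hsd : s j ≤ d
      · -- main case
        have hfb : f j * b ∈ initialDegreePiece nn f s {i | i < j} d := by
          have h1 : w + f j * b ∈ initialDegreePiece nn f s {i | i < j} d :=
            le_sup_left (α := Ideal Q) hz2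
          have h2 : w ∈ initialDegreePiece nn f s {i | i < j} d :=
            gradD_le_idp hfs j d hw
          have := Ideal.sub_mem _ h1 h2
          simpa using this
        have hb' := hini j (d - s j) b hb (by rwa [Nat.sub_add_cancel hsd])
        have hb'' := idp_le j (d - s j) hb'
        obtain ⟨β, hβ, γ, hγ, hbe⟩ := Submodule.mem_sup.1 hb''
        have hγD : f j * γ ∈ gradD nn f s t d := by
          have h3 : γ * f j ∈ gradD nn f s t (d - s j) * nn ^ (s j) :=
            Ideal.mul_mem_mul hγ (hfs j)
          have h4 := gradD_mul_pow_le (nn := nn) (f := f) (s := s) t (d - s j) (s j) h3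
          rw [Nat.sub_add_cancel hsd] at h4
          rwa [mul_comm]
        have hfβpow : f j * β ∈ nn ^ (d + 1) := by
          have : f j * β ∈ nn ^ (s j) * nn ^ (d - s j + 1) := Ideal.mul_mem_mul (hfs j) hβ
          rw [← pow_add] at this
          exact Ideal.pow_le_pow_right (by omega) this
        have hu : w + f j * γ ∈ gradD nn f s t (d + 1) := by
          refine ih d ⟨Ideal.add_mem _ hw hγD, ?_⟩
          have : w + f j * γ = (w + f j * b) - f j * β := by rw [← hbe]; ring
          rw [this]
          exact Ideal.sub_mem _ hz2 hfβpow
        have hfβ : f j * β ∈ Ideal.span {f j} * nn ^ (d + 1 - s j) := by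
          have he : d - s j + 1 = d + 1 - s j := by omega
          exact Ideal.mul_mem_mul (Ideal.mem_span_singleton_self _) (he ▸ hβ)
        have : w + f j * b = (w + f j * γ) + f j * β := by rw [← hbe]; ring
        rw [this]
        exact Submodule.add_mem_sup hu hfβ
      · -- s j > d : f j itself is deep
        have hfj : f j ∈ nn ^ (d + 1) := Ideal.pow_le_pow_right (by omega) (hfs j)
        have hfb : f j * b ∈ nn ^ (d + 1) := Ideal.mul_mem_right b _ hfj
        have hw' : w ∈ gradD nn f s t (d + 1) := by
          refine ih d ⟨hw, ?_⟩
          have : w = (w + f j * b) - f j * b := by ring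
          rw [this]
          exact Ideal.sub_mem _ hz2 hfb
        have hfb' : f j * b ∈ Ideal.span {f j} * nn ^ (d + 1 - s j) := by
          have h0 : d + 1 - s j = 0 := by omega
          rw [h0, pow_zero, mul_one]
          exact Ideal.mem_span_singleton.2 ⟨b, rfl⟩
        exact Submodule.add_mem_sup hw' hfb'
    · have heq : ∀ d', gradD nn f s (t + 1) d' = gradD nn f s t d' := fun d' =>
        le_antisymm (gradD_le_of fun i _ => by omega) (gradD_le_of fun i hi => by omega)
      rw [heq d, heq (d + 1)]
      exact ih d

lemma claimC (hfs : ∀ i, f i ∈ nn ^ s i) (hini : InitialFormsRegular nn f s)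
    (t d : ℕ) {x : Q} (hx : x ∈ nn ^ d)
    (hx2 : x ∈ gradD nn f s t 0 ⊔ nn ^ (d + 1)) :
    x ∈ gradD nn f s t d ⊔ nn ^ (d + 1) := by
  suffices h : ∀ e, e ≤ d → x ∈ gradD nn f s t e ⊔ nn ^ (d + 1) from h d le_rfl
  intro e
  induction e with
  | zero => exact fun _ => hx2
  | succ e ih =>
    intro he
    obtain ⟨w, hw, y, hy, rfl⟩ := Submodule.mem_sup.1 (ih (by omega))
    have hw' : w ∈ nn ^ (e + 1) := by
      have hxy : w = (w + y) - y := by ring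
      rw [hxy]
      exact Ideal.sub_mem _ (Ideal.pow_le_pow_right (by omega) hx)
        (Ideal.pow_le_pow_right (by omega) hy)
    exact Submodule.add_mem_sup (keyK hfs hini t e ⟨hw, hw'⟩) hy

lemma span_image_eq_gradD_zero {t : ℕ} :
    Ideal.span (f '' {i : Fin c | (i : ℕ) < t}) = gradD nn f s t 0 := by
  apply le_antisymm
  · rw [Ideal.span_le]
    rintro x ⟨i, hi, rfl⟩
    refine term_le_gradD hi ?_
    rw [Nat.zero_sub, pow_zero, mul_one]
    exact Ideal.mem_span_singleton_self _
  · refine iSup₂_le fun i hi => ?_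
    rw [Nat.zero_sub, pow_zero, mul_one]
    exact Ideal.span_mono (Set.singleton_subset_iff.2 ⟨i, hi, rfl⟩)

end Aux

/-- **2.5.**  Let `(Q, 𝔫)` be regular local and `f 0, …, f (c-1) ∈ 𝔫` a `Q`-regular sequence
whose initial forms form a `G(Q)`-regular sequence.  If `B = Q/(f 0, …, f (c-2))` then the
order of the image of the last element `f (c-1)` in `B` equals `ord_Q (f (c-1))`. -/
theorem order_of_image_in_intermediate_quotient
    (Q : Type) [CommRing Q] [IsLocalRing Q] [IsNoetherianRing Q]
    (hQreg : IsRegularLocal Q)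
    (c : ℕ) (hc : 0 < c) (f : Fin c → Q)
    (hfn : ∀ i, f i ∈ maximalIdeal Q)
    (hfreg : RingTheory.Sequence.IsRegular Q (List.ofFn f))
    (s : Fin c → ℕ)
    (hs : ∀ i, f i ∈ (maximalIdeal Q) ^ (s i) ∧ f i ∉ (maximalIdeal Q) ^ (s i + 1))
    (hini : InitialFormsRegular (maximalIdeal Q) f s)
    (B : Type) [CommRing B] [IsLocalRing B]
    (π : Q →+* B) (hπ : Function.Surjective π)
    (hker : RingHom.ker π = Ideal.span (f '' {i : Fin c | (i : ℕ) < c - 1})) :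
    ∀ jc : Fin c, (jc : ℕ) = c - 1 →
      π (f jc) ∈ (maximalIdeal B) ^ (s jc) ∧
        π (f jc) ∉ (maximalIdeal B) ^ (s jc + 1) := by
  intro jc hjc
  set nn := maximalIdeal Q with hnn
  have hfs : ∀ i, f i ∈ nn ^ s i := fun i => (hs i).1
  have hker_le : RingHom.ker π ≤ nn := by
    rw [hker, Ideal.span_le]
    rintro x ⟨i, _, rfl⟩
    exact hfn i
  have hmap : Ideal.map π nn = maximalIdeal B := by
    apply le_antisymm
    · rw [Ideal.map_le_iff_le_comap]
      intro x hx
      rw [Ideal.mem_comap, mem_maximalIdeal]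
      rintro ⟨u, hu⟩
      obtain ⟨y, hy⟩ := hπ (↑u⁻¹)
      have hk : x * y - 1 ∈ RingHom.ker π := by
        rw [RingHom.mem_ker, map_sub, map_mul, hy, ← hu, map_one, Units.mul_inv, sub_self]
      have h1 : (1 : Q) ∈ nn := by
        have h2 := Ideal.sub_mem _ (Ideal.mul_mem_right y _ hx) (hker_le hk)
        simpa using h2
      exact (maximalIdeal.isMaximal Q).ne_top ((Ideal.eq_top_iff_one _).2 h1)
    · intro b hb
      obtain ⟨x, rfl⟩ := hπ b
      refine Ideal.mem_map_of_mem π ?_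
      rw [hnn, mem_maximalIdeal]
      exact fun h => (mem_maximalIdeal _).1 hb (h.map π)
  constructor
  · rw [← hmap, ← Ideal.map_pow]
    exact Ideal.mem_map_of_mem π (hs jc).1
  · intro hmem
    rw [← hmap, ← Ideal.map_pow] at hmem
    have hcomap : f jc ∈ nn ^ (s jc + 1) ⊔ RingHom.ker π := by
      have h1 : f jc ∈ Ideal.comap π (Ideal.map π (nn ^ (s jc + 1))) := hmem
      rwa [Ideal.comap_map_of_surjective π hπ, ← RingHom.ker_eq_comap_bot] at h1
    have hsets : {i : Fin c | (i : ℕ) < c - 1} = {i : Fin c | (i : ℕ) < (jc : ℕ)} := by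
      ext i; simp [hjc]
    have hx2 : f jc ∈ gradD nn f s (jc : ℕ) 0 ⊔ nn ^ (s jc + 1) := by
      rw [← span_image_eq_gradD_zero, ← hsets, ← hker]
      rw [sup_comm] at hcomap
      exact hcomap
    have hx := claimC hfs hini (jc : ℕ) (s jc) (hs jc).1 hx2
    have hidp : f jc ∈ initialDegreePiece nn f s {i | i < jc} (s jc) := by
      refine (sup_le (gradD_le_idp hfs jc (s jc)) le_sup_left : _ ≤ _) hx
    have h1 : (1 : Q) ∈ initialDegreePiece nn f s {i | i < jc} 0 := by
      refine hini jc 0 1 (by simp [Ideal.one_eq_top]) ?_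
      simpa using hidp
    have hone : (1 : Q) ∈ nn := by
      refine (sup_le (by rw [pow_one]) ?_ :
          initialDegreePiece nn f s {i | i < jc} 0 ≤ nn) h1
      refine iSup₂_le fun i _ => iSup_le fun hsi => ?_
      exfalso
      have hs0 : s i = 0 := Nat.le_zero.1 hsi
      have := (hs i).2
      rw [hs0, zero_add, pow_one] at this
      exact this (hfn i)
    exact (maximalIdeal.isMaximal Q).ne_top ((Ideal.eq_top_iff_one _).2 hone)
end

section
/- Let (Q, n) be a regular local ring, I ⊆ n^2 an ideal, and A = Q/I, so that G(A) = G(Q)/I^* where I^* is the ideal of G(Q) generated by the initial forms of elements of I. If A is a strict complete intersection, i.e., G(A) is a complete intersection (the ideal I^* is generated by a homogeneous G(Q)-regular sequence), then there exists a Q-regular sequence f_1, …, f_c with I = (f_1,…,f_c) such that the initial forms f_1^*, …, f_c^* form a G(Q)-regular sequence and G(A) = G(Q)/(f_1^*,…,f_c^*). -/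
open IsLocalRing

namespace SCIaux

variable {Q : Type} [CommRing Q] {c : ℕ}

/-- unconditioned degree piece -/
noncomputable def Dset (nn : Ideal Q) (f : Fin c → Q) (s : Fin c → ℕ)
    (S : Set (Fin c)) (k : ℕ) : Ideal Q :=
  ⨆ i ∈ S, Ideal.span {f i} * nn ^ (k - s i)

noncomputable def Jid (f : Fin c → Q) (S : Set (Fin c)) : Ideal Q :=
  ⨆ i ∈ S, Ideal.span {f i}

variable {nn : Ideal Q} {f g : Fin c → Q} {s : Fin c → ℕ}

lemma single_le_pow (hf : f i ∈ nn ^ s i) (k : ℕ) :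
    Ideal.span {f i} * nn ^ (k - s i) ≤ nn ^ k := by
  calc Ideal.span {f i} * nn ^ (k - s i) ≤ nn ^ s i * nn ^ (k - s i) :=
        Ideal.mul_mono_left ((Ideal.span_le).mpr (by simpa using hf))
    _ = nn ^ (s i + (k - s i)) := by rw [pow_add]
    _ ≤ nn ^ k := Ideal.pow_le_pow_right (by omega)

lemma Dset_le_pow (hf : ∀ i, f i ∈ nn ^ s i) (S : Set (Fin c)) (k : ℕ) :
    Dset nn f s S k ≤ nn ^ k :=
  iSup₂_le fun i _ => single_le_pow (hf i) k

lemma Dset_le_Jid (S : Set (Fin c)) (k : ℕ) : Dset nn f s S k ≤ Jid f S :=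
  iSup₂_le fun i hi => le_trans (by
      calc Ideal.span {f i} * nn ^ (k - s i) ≤ Ideal.span {f i} * ⊤ :=
            Ideal.mul_mono_right le_top
        _ = Ideal.span {f i} := Ideal.mul_top _)
    (le_iSup₂ (f := fun i (_ : i ∈ S) => Ideal.span {f i}) i hi)

lemma single_le_Dset {S : Set (Fin c)} (hi : i ∈ S) (k : ℕ) :
    Ideal.span {f i} * nn ^ (k - s i) ≤ Dset nn f s S k :=
  le_iSup₂ (f := fun i (_ : i ∈ S) => Ideal.span {f i} * nn ^ (k - s i)) i hi

lemma Dset_mono_deg {S : Set (Fin c)} {k k' : ℕ} (h : k ≤ k') :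
    Dset nn f s S k' ≤ Dset nn f s S k :=
  iSup₂_le fun i hi => le_trans
    (Ideal.mul_mono_right (Ideal.pow_le_pow_right (by omega)))
    (single_le_Dset hi k)

lemma Dset_mono_set {S T : Set (Fin c)} (h : S ⊆ T) (k : ℕ) :
    Dset nn f s S k ≤ Dset nn f s T k :=
  iSup₂_le fun i hi => single_le_Dset (h hi) k

lemma Jid_mono {S T : Set (Fin c)} (h : S ⊆ T) : Jid f S ≤ Jid f T :=
  iSup₂_le fun i hi => le_iSup₂ (f := fun i (_ : i ∈ T) => Ideal.span {f i}) i (h hi)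

lemma mem_Jid {S : Set (Fin c)} (hi : i ∈ S) : f i ∈ Jid f S :=
  (le_iSup₂ (f := fun i (_ : i ∈ S) => Ideal.span {f i}) i hi)
    (Ideal.mem_span_singleton_self _)

lemma piece_eq (hf : ∀ i, f i ∈ nn ^ s i) (S : Set (Fin c)) (dg : ℕ) :
    initialDegreePiece nn f s S dg = nn ^ (dg + 1) ⊔ Dset nn f s S dg := by
  apply le_antisymm
  · apply sup_le le_sup_left
    apply iSup₂_le; intro i hi
    apply iSup_le; intro _
    exact le_trans (single_le_Dset hi dg) le_sup_right
  · apply sup_le le_sup_left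
    apply iSup₂_le; intro i hi
    by_cases hsi : s i ≤ dg
    · refine le_trans ?_ le_sup_right
      exact le_iSup₂_of_le i hi (le_iSup_of_le hsi le_rfl)
    · refine le_trans ?_ le_sup_left
      have h0 : dg - s i = 0 := by omega
      rw [h0, pow_zero, mul_one]
      refine (Ideal.span_le).mpr ?_
      intro x hx
      rcases hx with rfl
      exact (Ideal.pow_le_pow_right (by omega)) (hf i)

lemma piece_le_piece_congr (hfg : ∀ i, f i - g i ∈ nn ^ (s i + 1))
    (S : Set (Fin c)) (dg : ℕ) :
    initialDegreePiece nn f s S dg ≤ initialDegreePiece nn g s S dg := by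
  apply sup_le le_sup_left
  apply iSup₂_le; intro i hi
  apply iSup_le; intro hsi
  have hspan : Ideal.span {f i} ≤ Ideal.span {g i} ⊔ Ideal.span {f i - g i} := by
    refine (Ideal.span_le).mpr ?_
    intro x hx; rcases hx with rfl
    exact Submodule.mem_sup.mpr ⟨g i, Ideal.mem_span_singleton_self _,
      f i - g i, Ideal.mem_span_singleton_self _, by ring⟩
  calc Ideal.span {f i} * nn ^ (dg - s i)
      ≤ (Ideal.span {g i} ⊔ Ideal.span {f i - g i}) * nn ^ (dg - s i) :=
        Ideal.mul_mono_left hspan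
    _ = Ideal.span {g i} * nn ^ (dg - s i) ⊔ Ideal.span {f i - g i} * nn ^ (dg - s i) := by
        rw [Ideal.sup_mul]
    _ ≤ initialDegreePiece nn g s S dg := by
        apply sup_le
        · exact le_trans (le_iSup₂_of_le i hi
              (le_iSup (fun _ : s i ≤ dg => Ideal.span {g i} * nn ^ (dg - s i)) hsi))
            (le_sup_right : _ ≤ nn ^ (dg + 1) ⊔ _)
        · refine le_trans ?_ (le_sup_left : nn ^ (dg+1) ≤ _)
          calc Ideal.span {f i - g i} * nn ^ (dg - s i)
              ≤ nn ^ (s i + 1) * nn ^ (dg - s i) :=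
                Ideal.mul_mono_left ((Ideal.span_le).mpr (by simpa using hfg i))
            _ = nn ^ (s i + 1 + (dg - s i)) := (pow_add nn (s i + 1) (dg - s i)).symm
            _ ≤ nn ^ (dg + 1) := Ideal.pow_le_pow_right (by omega)

lemma piece_congr (hfg : ∀ i, f i - g i ∈ nn ^ (s i + 1))
    (S : Set (Fin c)) (dg : ℕ) :
    initialDegreePiece nn f s S dg = initialDegreePiece nn g s S dg :=
  le_antisymm (piece_le_piece_congr hfg S dg)
    (piece_le_piece_congr (fun i => by
      have := (nn ^ (s i + 1)).neg_mem (hfg i)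
      simpa using this) S dg)

lemma initialFormsRegular_congr (hfg : ∀ i, f i - g i ∈ nn ^ (s i + 1))
    (hg : InitialFormsRegular nn g s) : InitialFormsRegular nn f s := by
  intro j k x hx hmul
  rw [piece_congr hfg]
  rw [piece_congr hfg] at hmul
  apply hg j k x hx
  have hdiff : f j * x - g j * x ∈ nn ^ (k + s j + 1) := by
    have : f j * x - g j * x = (f j - g j) * x := by ring
    rw [this]
    have h1 : (f j - g j) * x ∈ nn ^ (s j + 1) * nn ^ k :=
      Ideal.mul_mem_mul (hfg j) hx
    rw [← pow_add] at h1
    exact (Ideal.pow_le_pow_right (by omega)) h1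
  have : g j * x = f j * x - (f j * x - g j * x) := by ring
  rw [this]
  apply sub_mem hmul
  exact Submodule.mem_sup_left hdiff

section LocalRing

variable {Q : Type} [CommRing Q] [IsLocalRing Q] [IsNoetherianRing Q] {c : ℕ}
variable {f : Fin c → Q} {s : Fin c → ℕ}

local notation "nn" => maximalIdeal Q

lemma mem_of_forall_mem_sup_pow (M : Ideal Q) (x : Q)
    (hx : ∀ N, x ∈ M ⊔ nn ^ N) : x ∈ M := by
  by_cases hM : M = ⊤
  · simp [hM]
  letI : Nontrivial (Q ⧸ M) := Ideal.Quotient.nontrivial_iff.mpr hM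
  letI : IsLocalRing (Q ⧸ M) := IsLocalRing.of_surjective' _ Ideal.Quotient.mk_surjective
  set J : Ideal (Q ⧸ M) := (maximalIdeal Q).map (Ideal.Quotient.mk M)
  have hJ : J ≠ ⊤ := by
    intro h
    have h1 : Ideal.comap (Ideal.Quotient.mk M) J = ⊤ := by rw [h, Ideal.comap_top]
    have h2 : maximalIdeal Q ⊔ M = ⊤ := by
      rw [← h1, Ideal.comap_map_of_surjective _ Ideal.Quotient.mk_surjective,
        ← RingHom.ker_eq_comap_bot, Ideal.mk_ker]
    rw [sup_eq_left.mpr (le_maximalIdeal hM)] at h2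
    exact (maximalIdeal.isMaximal Q).ne_top h2
  have hx0 : Ideal.Quotient.mk M x ∈ (⨅ N : ℕ, J ^ N) := by
    rw [Ideal.mem_iInf]
    intro N
    obtain ⟨a, ha, b, hb, rfl⟩ := Submodule.mem_sup.mp (hx N)
    rw [map_add, Ideal.Quotient.eq_zero_iff_mem.mpr ha, zero_add, ← Ideal.map_pow]
    exact Ideal.mem_map_of_mem _ hb
  rw [Ideal.iInf_pow_eq_bot_of_isLocalRing J hJ] at hx0
  exact Ideal.Quotient.eq_zero_iff_mem.mp hx0

/-- the set of indices below `j` -/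
def ltSet (c j : ℕ) : Set (Fin c) := {i | (i : ℕ) < j}

lemma Jid_succ (j : ℕ) (hj : j < c) :
    Jid f (ltSet c (j+1)) = Jid f (ltSet c j) ⊔ Ideal.span {f ⟨j, hj⟩} := by
  apply le_antisymm
  · apply iSup₂_le; intro i hi
    rcases Nat.lt_succ_iff_lt_or_eq.mp hi with h | h
    · exact le_trans
        (le_iSup₂ (f := fun i (_ : i ∈ ltSet c j) => Ideal.span {f i}) i h) le_sup_left
    · have : i = ⟨j, hj⟩ := Fin.ext h
      rw [this]; exact le_sup_right
  · apply sup_le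
    · exact Jid_mono (fun i hi => Nat.lt_succ_of_lt hi)
    · exact le_iSup₂ (f := fun i (_ : i ∈ ltSet c (j+1)) => Ideal.span {f i})
        ⟨j, hj⟩ (Nat.lt_succ_self j)

theorem vv (hf : ∀ i, f i ∈ nn ^ s i) (hreg : InitialFormsRegular nn f s) :
    ∀ j, j ≤ c → ∀ k, Jid f (ltSet c j) ⊓ nn ^ k ≤ Dset nn f s (ltSet c j) k := by
  intro j
  induction j with
  | zero =>
    intro _ k x hx
    have hbot : Jid f (ltSet c 0) = ⊥ := by
      apply le_bot_iff.mp; apply iSup₂_le; intro i hi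
      exact absurd hi (Nat.not_lt_zero _)
    have : x = 0 := by
      have := (Submodule.mem_inf.mp hx).1
      rw [hbot] at this; simpa using this
    rw [this]; exact zero_mem _
  | succ j IH =>
    intro hj1 k
    have hj : j < c := Nat.lt_of_succ_le hj1
    have IH' := IH hj.le
    set jF : Fin c := ⟨j, hj⟩ with hjF
    have hsub : ltSet c j ⊆ ltSet c (j+1) := fun i hi => Nat.lt_succ_of_lt hi
    have hset : {i : Fin c | i < jF} = ltSet c j := rfl
    have base : ∀ (m : ℕ) (y a : Q), y ∈ Jid f (ltSet c j) → a ∈ nn ^ m →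
        y + f jF * a ∈ nn ^ k → k ≤ m + s jF →
        y + f jF * a ∈ Dset nn f s (ltSet c (j+1)) k := by
      intro m y a hy ha hx hk
      have hfa : f jF * a ∈ Ideal.span {f jF} * nn ^ (k - s jF) :=
        Ideal.mul_mem_mul (Ideal.mem_span_singleton_self _)
          ((Ideal.pow_le_pow_right (by omega)) ha)
      have hfaD : f jF * a ∈ Dset nn f s (ltSet c (j+1)) k :=
        single_le_Dset (show (jF : ℕ) < j+1 from Nat.lt_succ_self j) k hfa
      have hfak : f jF * a ∈ nn ^ k := single_le_pow (hf jF) k hfa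
      have hyk : y ∈ nn ^ k := by
        have he : y = (y + f jF * a) - f jF * a := by ring
        rw [he]; exact sub_mem hx hfak
      have hyD := IH' k (Submodule.mem_inf.mpr ⟨hy, hyk⟩)
      exact add_mem (Dset_mono_set hsub k hyD) hfaD
    have aux : ∀ (t m : ℕ) (y a : Q), y ∈ Jid f (ltSet c j) → a ∈ nn ^ m →
        y + f jF * a ∈ nn ^ k → k ≤ m + s jF + t →
        y + f jF * a ∈ Dset nn f s (ltSet c (j+1)) k := by
      intro t
      induction t with
      | zero => intro m y a hy ha hx hk; exact base m y a hy ha hx (by omega)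
      | succ t IHt =>
        intro m y a hy ha hx hk
        by_cases hk2 : k ≤ m + s jF
        · exact base m y a hy ha hx hk2
        push_neg at hk2
        have hfa : f jF * a ∈ nn ^ (m + s jF) := by
          have h1 := Ideal.mul_mem_mul (hf jF) ha
          rw [← pow_add] at h1
          exact (Ideal.pow_le_pow_right (by omega)) h1
        have hy2 : y ∈ nn ^ (m + s jF) := by
          have he : y = (y + f jF * a) - f jF * a := by ring
          rw [he]
          exact sub_mem ((Ideal.pow_le_pow_right (by omega)) hx) hfa
        have hyD : y ∈ Dset nn f s (ltSet c j) (m + s jF) :=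
          IH' _ (Submodule.mem_inf.mpr ⟨hy, hy2⟩)
        have hfap : f jF * a ∈ initialDegreePiece nn f s {i | i < jF} (m + s jF) := by
          rw [hset, piece_eq hf]
          have he : f jF * a = (y + f jF * a) + (-y) := by ring
          rw [he]
          exact add_mem (Submodule.mem_sup_left ((Ideal.pow_le_pow_right (by omega)) hx))
            (Submodule.mem_sup_right (neg_mem hyD))
        have ha2 := hreg jF m a ha hfap
        rw [hset, piece_eq hf] at ha2
        obtain ⟨a', ha', b, hb, hab⟩ := Submodule.mem_sup.mp ha2
        have hyb : y + f jF * b ∈ Jid f (ltSet c j) :=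
          add_mem hy (Ideal.mul_mem_left _ _ (Dset_le_Jid _ _ hb))
        have he : y + f jF * a = (y + f jF * b) + f jF * a' := by
          rw [← hab]; ring
        rw [he]
        exact IHt (m+1) _ _ hyb ha' (by rw [← he]; exact hx) (by omega)
    intro x hx
    obtain ⟨hxJ, hxk⟩ := Submodule.mem_inf.mp hx
    rw [Jid_succ j hj] at hxJ
    obtain ⟨y, hy, z, hz, hyz⟩ := Submodule.mem_sup.mp hxJ
    obtain ⟨a, haz⟩ := Ideal.mem_span_singleton'.mp hz
    have he : x = y + f jF * a := by rw [← hyz, ← haz]; ring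
    rw [he]
    exact aux k 0 y a hy (by rw [pow_zero, Ideal.one_eq_top]; trivial)
      (by rw [← he]; exact hxk) (by omega)

theorem nzd (hf : ∀ i, f i ∈ nn ^ s i) (hreg : InitialFormsRegular nn f s)
    (j : ℕ) (hj : j < c) (a : Q) (h : f ⟨j, hj⟩ * a ∈ Jid f (ltSet c j)) :
    a ∈ Jid f (ltSet c j) := by
  set jF : Fin c := ⟨j, hj⟩ with hjF
  have hset : {i : Fin c | i < jF} = ltSet c j := rfl
  have key : ∀ m, a ∈ Jid f (ltSet c j) ⊔ nn ^ m := by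
    intro m
    induction m with
    | zero =>
      rw [pow_zero, Ideal.one_eq_top, sup_top_eq]; trivial
    | succ m IHm =>
      obtain ⟨b, hb, a₀, ha₀, hba⟩ := Submodule.mem_sup.mp IHm
      have h1 : f jF * a₀ ∈ Jid f (ltSet c j) := by
        have he : f jF * a₀ = f jF * a - f jF * b := by rw [← hba]; ring
        rw [he]; exact sub_mem h (Ideal.mul_mem_left _ _ hb)
      have h2 : f jF * a₀ ∈ nn ^ (m + s jF) := by
        have h2' := Ideal.mul_mem_mul (hf jF) ha₀
        rw [← pow_add] at h2'
        exact (Ideal.pow_le_pow_right (by omega)) h2'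
      have h3 : f jF * a₀ ∈ Dset nn f s (ltSet c j) (m + s jF) :=
        vv hf hreg j hj.le _ (Submodule.mem_inf.mpr ⟨h1, h2⟩)
      have h4 : f jF * a₀ ∈ initialDegreePiece nn f s {i | i < jF} (m + s jF) := by
        rw [hset, piece_eq hf]; exact Submodule.mem_sup_right h3
      have h5 := hreg jF m a₀ ha₀ h4
      rw [hset, piece_eq hf] at h5
      obtain ⟨u, hu, v, hv, huv⟩ := Submodule.mem_sup.mp h5
      have he : a = (b + v) + u := by rw [← hba, ← huv]; ring
      rw [he]
      exact Submodule.mem_sup.mpr ⟨b + v, add_mem hb (Dset_le_Jid _ _ hv), u, hu, rfl⟩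
  exact mem_of_forall_mem_sup_pow _ a key

lemma ofList_take_ofFn (f : Fin c → Q) (j : ℕ) :
    Ideal.ofList ((List.ofFn f).take j) = Jid f (ltSet c j) := by
  apply le_antisymm
  · apply Ideal.span_le.mpr
    intro x hx
    rw [Set.mem_setOf_eq, List.mem_take_iff_getElem] at hx
    obtain ⟨m, hm, hmx⟩ := hx
    have hmc : m < c := by
      have := lt_of_lt_of_le hm (min_le_right _ _)
      simpa using this
    have hmj : m < j := lt_of_lt_of_le hm (min_le_left _ _)
    rw [List.getElem_ofFn] at hmx
    rw [← hmx]
    exact mem_Jid (show ((⟨m, by simpa using hm.trans_le (min_le_right _ _)⟩ : Fin c) : ℕ) < j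
      from hmj)
  · apply iSup₂_le; intro i hi
    apply Ideal.span_le.mpr
    intro x hx; rcases hx with rfl
    apply Ideal.subset_span
    rw [Set.mem_setOf_eq, List.mem_take_iff_getElem]
    refine ⟨(i : ℕ), lt_min hi (by simpa using i.isLt), ?_⟩
    rw [List.getElem_ofFn]

lemma isSMulRegular_quot (N : Submodule Q Q) (r : Q)
    (h : ∀ a, r * a ∈ N → a ∈ N) : IsSMulRegular (Q ⧸ N) r := by
  intro x y hxy
  obtain ⟨a, rfl⟩ := Submodule.Quotient.mk_surjective N x
  obtain ⟨b, rfl⟩ := Submodule.Quotient.mk_surjective N y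
  simp only [← Submodule.Quotient.mk_smul] at hxy
  rw [Submodule.Quotient.eq] at hxy ⊢
  exact h (a - b) (by simpa [smul_eq_mul, mul_sub] using hxy)

lemma ofList_ofFn (f : Fin c → Q) :
    Ideal.ofList (List.ofFn f) = Ideal.span (Set.range f) := by
  show Ideal.span {r | r ∈ List.ofFn f} = _
  have h : {r | r ∈ List.ofFn f} = Set.range f := by
    ext x; exact List.mem_ofFn
  rw [h]

theorem main_isRegular (hf : ∀ i, f i ∈ nn ^ s i) (hf1 : Ideal.span (Set.range f) ≠ ⊤)
    (hreg : InitialFormsRegular nn f s) :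
    RingTheory.Sequence.IsRegular Q (List.ofFn f) := by
  constructor
  · rw [RingTheory.Sequence.isWeaklyRegular_iff]
    intro i hi
    have hic : i < c := by simpa using hi
    have heq : (Ideal.ofList ((List.ofFn f).take i) • ⊤ : Submodule Q Q)
        = Jid f (ltSet c i) := by
      rw [smul_eq_mul, Ideal.mul_top, ofList_take_ofFn]
    rw [heq, List.getElem_ofFn]
    apply isSMulRegular_quot
    intro a ha
    exact nzd hf hreg i hic a (by convert ha using 3)
  · intro h
    apply hf1
    rw [← ofList_ofFn]
    have : (Ideal.ofList (List.ofFn f) • ⊤ : Submodule Q Q) = Ideal.ofList (List.ofFn f) := by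
      rw [smul_eq_mul, Ideal.mul_top]
    rw [this] at h
    exact (eq_top_iff.mpr (le_of_eq h))

end LocalRing

end SCIaux

/-- **1.1 (strict complete intersections).**  Let `(Q, 𝔫)` be regular local, `I ⊆ 𝔫²` an
ideal and `A = Q/I`, so `G(A) = G(Q)/I^*`.  Suppose `A` is a strict complete intersection:
`I^*` is generated by a homogeneous `G(Q)`-regular sequence, given by representatives
`g i ∈ (I ∩ 𝔫^(s i)) + 𝔫^(s i + 1)` of homogeneous elements of `I^*` of degrees `s i`
(here the degree-`dg` piece of `I^*` is represented by `(I ∩ 𝔫^dg) + 𝔫^(dg+1)`).  Then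
there is a `Q`-regular sequence `f` with `I = (f)` whose initial forms form a
`G(Q)`-regular sequence and generate `I^*`, i.e. `G(A) = G(Q)/(f^*)`. -/
theorem strict_complete_intersection_has_good_generators
    (Q : Type) [CommRing Q] [IsLocalRing Q] [IsNoetherianRing Q]
    (hQreg : IsRegularLocal Q)
    (I : Ideal Q) (hI : I ≤ (maximalIdeal Q) ^ 2)
    (c : ℕ) (g : Fin c → Q) (s : Fin c → ℕ)
    (hgmem : ∀ i, g i ∈ (I ⊓ (maximalIdeal Q) ^ (s i)) ⊔ (maximalIdeal Q) ^ (s i + 1))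
    (hgne : ∀ i, g i ∉ (maximalIdeal Q) ^ (s i + 1))
    (hggen : ∀ dg : ℕ, (I ⊓ (maximalIdeal Q) ^ dg) ⊔ (maximalIdeal Q) ^ (dg + 1) =
      initialDegreePiece (maximalIdeal Q) g s Set.univ dg)
    (hgreg : InitialFormsRegular (maximalIdeal Q) g s) :
    ∃ (f : Fin c → Q) (t : Fin c → ℕ),
      RingTheory.Sequence.IsRegular Q (List.ofFn f) ∧
      Ideal.span (Set.range f) = I ∧
      (∀ i, f i ∈ (maximalIdeal Q) ^ (t i) ∧ f i ∉ (maximalIdeal Q) ^ (t i + 1)) ∧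
      InitialFormsRegular (maximalIdeal Q) f t ∧
      ∀ dg : ℕ, (I ⊓ (maximalIdeal Q) ^ dg) ⊔ (maximalIdeal Q) ^ (dg + 1) =
        initialDegreePiece (maximalIdeal Q) f t Set.univ dg := by
  classical
  set nn := maximalIdeal Q with hnndef
  choose p hpm h hhm hsum using fun i => Submodule.mem_sup.mp (hgmem i)
  have hpI : ∀ i, p i ∈ I := fun i => (Submodule.mem_inf.mp (hpm i)).1
  have hps : ∀ i, p i ∈ nn ^ s i := fun i => (Submodule.mem_inf.mp (hpm i)).2
  have hpg : ∀ i, p i - g i ∈ nn ^ (s i + 1) := fun i => by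
    have he : p i - g i = -(h i) := by rw [← hsum i]; ring
    rw [he]; exact neg_mem (hhm i)
  have hpne : ∀ i, p i ∉ nn ^ (s i + 1) := fun i hmem => hgne i (by
    have he : g i = p i - (p i - g i) := by ring
    rw [he]; exact sub_mem hmem (hpg i))
  have hpreg : InitialFormsRegular nn p s := SCIaux.initialFormsRegular_congr hpg hgreg
  have hpgen : ∀ dg, (I ⊓ nn ^ dg) ⊔ nn ^ (dg+1) = initialDegreePiece nn p s Set.univ dg :=
    fun dg => by rw [SCIaux.piece_congr hpg]; exact hggen dg
  have hspanle : Ideal.span (Set.range p) ≤ I :=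
    Ideal.span_le.mpr (by rintro x ⟨i, rfl⟩; exact hpI i)
  have hJle : SCIaux.Jid p Set.univ ≤ Ideal.span (Set.range p) :=
    iSup₂_le fun i _ => Ideal.span_mono (by rintro x hx; rcases hx with rfl; exact ⟨i, rfl⟩)
  have key : ∀ N, I ≤ Ideal.span (Set.range p) ⊔ (I ⊓ nn ^ N) := by
    intro N
    induction N with
    | zero =>
      intro x hx
      exact Submodule.mem_sup_right (Submodule.mem_inf.mpr
        ⟨hx, by rw [pow_zero, Ideal.one_eq_top]; trivial⟩)
    | succ N IHN =>
      intro x hx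
      obtain ⟨u, hu, v, hv, huv⟩ := Submodule.mem_sup.mp (IHN hx)
      have hv2 : v ∈ initialDegreePiece nn p s Set.univ N := by
        rw [← hpgen N]; exact Submodule.mem_sup_left hv
      rw [SCIaux.piece_eq hps] at hv2
      obtain ⟨w, hw, d, hd, hwd⟩ := Submodule.mem_sup.mp hv2
      have hdspan : d ∈ Ideal.span (Set.range p) :=
        hJle (SCIaux.Dset_le_Jid Set.univ N hd)
      have hwI : w ∈ I := by
        have he : w = v - d := by rw [← hwd]; ring
        rw [he]; exact sub_mem (Submodule.mem_inf.mp hv).1 (hspanle hdspan)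
      refine Submodule.mem_sup.mpr ⟨u + d, add_mem hu hdspan, w,
        Submodule.mem_inf.mpr ⟨hwI, hw⟩, ?_⟩
      rw [← huv, ← hwd]; ring
  have hspan : Ideal.span (Set.range p) = I := by
    apply le_antisymm hspanle
    intro x hx
    apply SCIaux.mem_of_forall_mem_sup_pow
    intro N
    exact (sup_le_sup_left inf_le_right _ : _ ≤ Ideal.span (Set.range p) ⊔ nn ^ N) (key N hx)
  have hspanne : Ideal.span (Set.range p) ≠ ⊤ := by
    rw [hspan]
    intro hIt
    exact (maximalIdeal.isMaximal Q).ne_top (eq_top_iff.mpr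
      (hIt ▸ (hI.trans (Ideal.pow_le_self two_ne_zero))))
  exact ⟨p, s, SCIaux.main_isRegular hps hspanne hpreg, hspan,
    fun i => ⟨hps i, hpne i⟩, hpreg, hpgen⟩
end
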